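/- arXiv:2411.19225 — 2 statements merged into one kernel-verified Lean document; each statement's English description precedes it below -/
import Mathlib

section
/- Let G ∈ ℝ^{m×n}, L > 0, λ > 0, let R ∈ ℝ^{m×m} be symmetric, let t : ℕ → ℝ be any sequence with t_k ≠ 0 for k ≥ 1, and let S, W : ℕ → ℝ^{n×n} be sequences of matrices satisfying, for every k ≥ 1: S_k = T_{λ/L}( W_{k−1} − (2/L) Gᵀ G W_{k−1} Gᵀ G + (2/L) Gᵀ R G ) (soft-thresholding applied entrywise) and W_k = S_k + ((t_{k−1} − 1)/t_k)(S_k − S_{k−1}), with S_0 = W_0 symmetric. Then S_k and W_k are symmetric matrices for every k ≥ 0. -/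
open Matrix

/-- The soft-thresholding (shrinkage) map with parameter `α`, applied entrywise to a
matrix: each entry `x` is sent to `(|x| - α)⁺ · sign(x)`. -/
noncomputable def softThresh {m n : ℕ} (α : ℝ) (A : Matrix (Fin m) (Fin n) ℝ) :
    Matrix (Fin m) (Fin n) ℝ :=
  Matrix.of fun i j => max (|A i j| - α) 0 * Real.sign (A i j)

lemma softThresh_isSymm {n : ℕ} (α : ℝ) {A : Matrix (Fin n) (Fin n) ℝ}
    (hA : A.IsSymm) : (softThresh α A).IsSymm := by
  ext i j
  simp only [softThresh, Matrix.transpose_apply, Matrix.of_apply]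
  rw [hA.apply i j]

/-- Symmetric half of Theorem 2 of the paper: for the (real-part) FISTA iteration
`S_k = T_{λ/L}(W_{k-1} - (2/L) Gᵀ G W_{k-1} Gᵀ G + (2/L) Gᵀ R G)`,
`W_k = S_k + ((t_{k-1} - 1)/t_k)(S_k - S_{k-1})`, initialized with a symmetric
matrix `S_0 = W_0` and with `R` symmetric, all iterates `S_k`, `W_k` are
symmetric. -/
theorem fista_iterates_symm {m n : ℕ}
    (G : Matrix (Fin m) (Fin n) ℝ) (L lam : ℝ) (hL : 0 < L) (hlam : 0 < lam)
    (R : Matrix (Fin m) (Fin m) ℝ) (hR : R.IsSymm)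
    (t : ℕ → ℝ) (ht : ∀ k, 1 ≤ k → t k ≠ 0)
    (S W : ℕ → Matrix (Fin n) (Fin n) ℝ)
    (hS : ∀ k, 1 ≤ k →
      S k = softThresh (lam / L)
        (W (k - 1) - (2 / L) • (Gᵀ * G * W (k - 1) * (Gᵀ * G)) + (2 / L) • (Gᵀ * R * G)))
    (hWrec : ∀ k, 1 ≤ k →
      W k = S k + ((t (k - 1) - 1) / t k) • (S k - S (k - 1)))
    (h0 : S 0 = W 0) (h0symm : (S 0).IsSymm) :
    ∀ k, (S k).IsSymm ∧ (W k).IsSymm := by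
  intro k
  induction k with
  | zero => exact ⟨h0symm, h0 ▸ h0symm⟩
  | succ k ih =>
    have hk1 : 1 ≤ k + 1 := Nat.le_add_left 1 k
    have hWk : (W k).IsSymm := ih.2
    have hSsucc : (S (k + 1)).IsSymm := by
      rw [hS (k + 1) hk1]
      simp only [Nat.add_sub_cancel]
      apply softThresh_isSymm
      have hA1 : (Gᵀ * G * W k * (Gᵀ * G))ᵀ = Gᵀ * G * W k * (Gᵀ * G) := by
        simp [Matrix.transpose_mul, hWk.eq, Matrix.mul_assoc]
      have hA2 : (Gᵀ * R * G)ᵀ = Gᵀ * R * G := by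
        simp [Matrix.transpose_mul, hR.eq, Matrix.mul_assoc]
      unfold Matrix.IsSymm
      rw [Matrix.transpose_add, Matrix.transpose_sub, Matrix.transpose_smul,
        Matrix.transpose_smul, hA1, hA2, hWk]
    have hWsucc : (W (k + 1)).IsSymm := by
      rw [hWrec (k + 1) hk1]
      simp only [Nat.add_sub_cancel]
      exact (hSsucc.add (((hSsucc.sub ih.1)).smul _))
    exact ⟨hSsucc, hWsucc⟩
end

section
/- Let G ∈ ℝ^{m×n}, L > 0, λ > 0, let Q ∈ ℝ^{m×m} be antisymmetric, let t : ℕ → ℝ be any sequence with t_k ≠ 0 for k ≥ 1, and let S, W : ℕ → ℝ^{n×n} be sequences of matrices satisfying, for every k ≥ 1: S_k = T_{λ/L}( W_{k−1} − (2/L) Gᵀ G W_{k−1} Gᵀ G + (2/L) Gᵀ Q G ) (soft-thresholding applied entrywise) and W_k = S_k + ((t_{k−1} − 1)/t_k)(S_k − S_{k−1}), with S_0 = W_0 antisymmetric. Then S_k and W_k are antisymmetric matrices for every k ≥ 0. -/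
open Matrix

lemma softThresh_transpose {m n : ℕ} (α : ℝ) (A : Matrix (Fin m) (Fin n) ℝ) :
    (softThresh α A)ᵀ = softThresh α Aᵀ := by
  ext i j; simp [softThresh, Matrix.transpose_apply]

lemma softThresh_neg {m n : ℕ} (α : ℝ) (A : Matrix (Fin m) (Fin n) ℝ) :
    softThresh α (-A) = -(softThresh α A) := by
  ext i j
  simp [softThresh, Real.sign_neg, mul_neg]

/-- Antisymmetric half of Theorem 2 of the paper: for the (imaginary-part) FISTA
iteration `S_k = T_{λ/L}(W_{k-1} - (2/L) Gᵀ G W_{k-1} Gᵀ G + (2/L) Gᵀ Q G)`,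
`W_k = S_k + ((t_{k-1} - 1)/t_k)(S_k - S_{k-1})`, initialized with an antisymmetric
matrix `S_0 = W_0` and with `Q` antisymmetric, all iterates `S_k`, `W_k` are
antisymmetric. -/
theorem fista_iterates_antisymm {m n : ℕ}
    (G : Matrix (Fin m) (Fin n) ℝ) (L lam : ℝ) (hL : 0 < L) (hlam : 0 < lam)
    (Q : Matrix (Fin m) (Fin m) ℝ) (hQ : Qᵀ = -Q)
    (t : ℕ → ℝ) (ht : ∀ k, 1 ≤ k → t k ≠ 0)
    (S W : ℕ → Matrix (Fin n) (Fin n) ℝ)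
    (hS : ∀ k, 1 ≤ k →
      S k = softThresh (lam / L)
        (W (k - 1) - (2 / L) • (Gᵀ * G * W (k - 1) * (Gᵀ * G)) + (2 / L) • (Gᵀ * Q * G)))
    (hWrec : ∀ k, 1 ≤ k →
      W k = S k + ((t (k - 1) - 1) / t k) • (S k - S (k - 1)))
    (h0 : S 0 = W 0) (h0anti : (S 0)ᵀ = -(S 0)) :
    ∀ k, (S k)ᵀ = -(S k) ∧ (W k)ᵀ = -(W k) := by
  intro k
  induction k with
  | zero => exact ⟨h0anti, h0 ▸ h0anti⟩
  | succ k ih =>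
    obtain ⟨hSk, hWk⟩ := ih
    have hk1 : 1 ≤ k + 1 := Nat.le_add_left 1 k
    have hargT : (W k - (2 / L) • (Gᵀ * G * W k * (Gᵀ * G)) + (2 / L) • (Gᵀ * Q * G))ᵀ
        = -(W k - (2 / L) • (Gᵀ * G * W k * (Gᵀ * G)) + (2 / L) • (Gᵀ * Q * G)) := by
      simp only [Matrix.transpose_add, Matrix.transpose_sub, Matrix.transpose_smul,
        Matrix.transpose_mul, Matrix.transpose_transpose, hWk, hQ]
      simp only [Matrix.neg_mul, Matrix.mul_neg, smul_neg, mul_assoc]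
      rw [Matrix.mul_assoc Gᵀ Q G]
      abel
    have hSanti : (S (k + 1))ᵀ = -(S (k + 1)) := by
      rw [hS (k + 1) hk1]
      simp only [Nat.add_sub_cancel]
      rw [softThresh_transpose, hargT, softThresh_neg]
    refine ⟨hSanti, ?_⟩
    rw [hWrec (k + 1) hk1]
    simp only [Nat.add_sub_cancel, Matrix.transpose_add, Matrix.transpose_smul,
      Matrix.transpose_sub, hSanti, hSk]
    simp only [smul_sub, smul_neg]
    abel
end
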